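/- arXiv:1202.4834 — 2 statements merged into one kernel-verified Lean document; each statement's English description precedes it below -/
import Mathlib

section
/- Total correctness of while loops via a well-founded measure: let t : Store → ℤ be a termination term. If for every state s with b s there exists m with ⟦c⟧ s m and 0 ≤ t m < t s, and ⟦c⟧ is deterministic on guard-satisfying states, then for every state s with t s ≥ 0 the loop 'while (b) c' terminates, i.e., there exists s' with W s s'. -/
abbrev Store := String → ℤ

inductive While (b : Store → Prop) (C : Store → Store → Prop) : Store → Store → Prop
  | done {s : Store} : ¬ b s → While b C s s
  | step {s m s' : Store} : b s → C s m → While b C m s' → While b C s s'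

theorem while_total_correctness
    (b : Store → Prop) [DecidablePred b]
    (C : Store → Store → Prop) (t : Store → ℤ)
    (hprog : ∀ s, b s → ∃ m, C s m ∧ 0 ≤ t m ∧ t m < t s)
    (hdet : ∀ s, b s → ∀ m m', C s m → C s m' → m = m') :
    ∀ s, t s ≥ 0 → ∃ s', While b C s s' := by
  intro s hs
  by_cases hb : b s
  case neg => exact ⟨s, While.done hb⟩
  case pos =>
    suffices h : ∀ n : ℕ, ∀ s, t s = n → ∃ s', While b C s s' by
      exact h (t s).toNat s (Int.toNat_of_nonneg hs).symm
    intro n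
    induction n using Nat.strong_induction_on with
    | _ n ih =>
      intro s hsn
      by_cases hb : b s
      · obtain ⟨m, hCm, hm0, hmlt⟩ := hprog s hb
        have hlt : (t m).toNat < n := by omega
        obtain ⟨s', hW⟩ := ih (t m).toNat hlt m (Int.toNat_of_nonneg hm0).symm
        exact ⟨s', While.step hb hCm hW⟩
      · exact ⟨s, While.done hb⟩
end

section
/- Soundness of the local-variable rule: if c : f [xs] holds for command c, then the block '{var x; c}' (whose semantics relates s to s' iff there exist values v₀, v₁ such that ⟦c⟧ (s[x↦v₀]) induces a store whose restriction away from x equals s' away from x, and s' x = s x) satisfies the judgment with relation (λ s s', ∃ v₀ v₁, f (s[x↦v₀]) (s'[x↦v₁])) and modified-variable set xs \ {x}. -/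
theorem var_block_rule_sound
    (C : Store → Store → Prop) (f : Store → Store → Prop)
    (xs : Set String) (x : String)
    (hjudg : ∀ s s', C s s' → f s s' ∧ ∀ y ∉ xs, s' y = s y) :
    ∀ s s', (∃ (v₀ : ℤ) (t : Store), C (Function.update s x v₀) t ∧
               s' = Function.update t x (s x)) →
      (∃ v₀ v₁ : ℤ, f (Function.update s x v₀) (Function.update s' x v₁)) ∧
      ∀ y ∉ xs \ {x}, s' y = s y := by
  rintro s s' ⟨v₀, t, hC, rfl⟩
  obtain ⟨hf, hframe⟩ := hjudg _ _ hC
  constructor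
  · refine ⟨v₀, t x, ?_⟩
    have : Function.update (Function.update t x (s x)) x (t x) = t := by
      funext y
      by_cases h : y = x <;> simp [Function.update, h]
    rwa [this]
  · intro y hy
    by_cases h : y = x
    · subst h; simp
    · have hyxs : y ∉ xs := fun hyx => hy ⟨hyx, h⟩
      have := hframe y hyxs
      simp [Function.update, h] at this ⊢
      rw [this]
end
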